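/- The proposition ¬¬P ∨ ¬¬¬¬¬P has no constructive proof, where P is an atomic proposition. -/

import Mathlib

/-- Terms: de Bruijn variables and a binary function symbol (union). -/
inductive Tm : Type where
  | var : Nat → Tm
  | cup : Tm → Tm → Tm
deriving DecidableEq

def Tm.rename (f : Nat → Nat) : Tm → Tm
  | .var n => .var (f n)
  | .cup s t => .cup (s.rename f) (t.rename f)

def Tm.subst (σ : Nat → Tm) : Tm → Tm
  | .var n => σ n
  | .cup s t => .cup (s.subst σ) (t.subst σ)

/-- First-order formulas over Nat-indexed predicate symbols, de Bruijn binders. -/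
inductive Fm : Type where
  | atom : Nat → List Tm → Fm
  | top : Fm
  | bot : Fm
  | neg : Fm → Fm
  | and : Fm → Fm → Fm
  | or : Fm → Fm → Fm
  | imp : Fm → Fm → Fm
  | all : Fm → Fm
  | ex : Fm → Fm
deriving DecidableEq

def liftR (f : Nat → Nat) : Nat → Nat
  | 0 => 0
  | n + 1 => f n + 1

def liftS (σ : Nat → Tm) : Nat → Tm
  | 0 => .var 0
  | n + 1 => (σ n).rename Nat.succ

def Fm.rename (f : Nat → Nat) : Fm → Fm
  | .atom p l => .atom p (l.map (Tm.rename f))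
  | .top => .top
  | .bot => .bot
  | .neg A => .neg (A.rename f)
  | .and A B => .and (A.rename f) (B.rename f)
  | .or A B => .or (A.rename f) (B.rename f)
  | .imp A B => .imp (A.rename f) (B.rename f)
  | .all A => .all (A.rename (liftR f))
  | .ex A => .ex (A.rename (liftR f))

def Fm.subst (σ : Nat → Tm) : Fm → Fm
  | .atom p l => .atom p (l.map (Tm.subst σ))
  | .top => .top
  | .bot => .bot
  | .neg A => .neg (A.subst σ)
  | .and A B => .and (A.subst σ) (B.subst σ)
  | .or A B => .or (A.subst σ) (B.subst σ)
  | .imp A B => .imp (A.subst σ) (B.subst σ)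
  | .all A => .all (A.subst (liftS σ))
  | .ex A => .ex (A.subst (liftS σ))

/-- Shift all free variables up by one. -/
def Fm.shift (A : Fm) : Fm := A.rename Nat.succ

/-- Instantiate the outermost bound variable with term `t` : `(t/x)A`. -/
def Fm.inst (t : Tm) (A : Fm) : Fm :=
  A.subst (fun n => match n with | 0 => t | n + 1 => .var n)

/-- Double negation. -/
def Fm.dn (A : Fm) : Fm := .neg (.neg A)

/-- Cut-free classical multi-conclusion sequent calculus (Figure 1). -/
inductive Cl : List Fm → List Fm → Prop where
  | ax (A : Fm) : Cl [A] [A]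
  | perm {Γ Γ' Δ Δ'} : Γ.Perm Γ' → Δ.Perm Δ' → Cl Γ Δ → Cl Γ' Δ'
  | contrL {Γ Δ A} : Cl (A :: A :: Γ) Δ → Cl (A :: Γ) Δ
  | contrR {Γ Δ A} : Cl Γ (A :: A :: Δ) → Cl Γ (A :: Δ)
  | weakL {Γ Δ A} : Cl Γ Δ → Cl (A :: Γ) Δ
  | weakR {Γ Δ A} : Cl Γ Δ → Cl Γ (A :: Δ)
  | topR {Γ Δ} : Cl Γ (.top :: Δ)
  | botL {Γ Δ} : Cl (.bot :: Γ) Δ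
  | negL {Γ Δ A} : Cl Γ (A :: Δ) → Cl (.neg A :: Γ) Δ
  | negR {Γ Δ A} : Cl (A :: Γ) Δ → Cl Γ (.neg A :: Δ)
  | andL {Γ Δ A B} : Cl (A :: B :: Γ) Δ → Cl (.and A B :: Γ) Δ
  | andR {Γ Δ A B} : Cl Γ (A :: Δ) → Cl Γ (B :: Δ) → Cl Γ (.and A B :: Δ)
  | orL {Γ Δ A B} : Cl (A :: Γ) Δ → Cl (B :: Γ) Δ → Cl (.or A B :: Γ) Δ
  | orR1 {Γ Δ A B} : Cl Γ (A :: Δ) → Cl Γ (.or A B :: Δ)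
  | orR2 {Γ Δ A B} : Cl Γ (B :: Δ) → Cl Γ (.or A B :: Δ)
  | impL {Γ Δ A B} : Cl Γ (A :: Δ) → Cl (B :: Γ) Δ → Cl (.imp A B :: Γ) Δ
  | impR {Γ Δ A B} : Cl (A :: Γ) (B :: Δ) → Cl Γ (.imp A B :: Δ)
  | allL {Γ Δ A} (t : Tm) : Cl (A.inst t :: Γ) Δ → Cl (.all A :: Γ) Δ
  | allR {Γ Δ A} : Cl (Γ.map Fm.shift) (A :: Δ.map Fm.shift) → Cl Γ (.all A :: Δ)
  | exL {Γ Δ A} : Cl (A :: Γ.map Fm.shift) (Δ.map Fm.shift) → Cl (.ex A :: Γ) Δ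
  | exR {Γ Δ A} (t : Tm) : Cl Γ (A.inst t :: Δ) → Cl Γ (.ex A :: Δ)

/-- Constructive (intuitionistic) single-conclusion sequent calculus:
the restriction of the classical calculus to sequents with at most one
conclusion, with the adapted ⇒-left rule. -/
inductive Intu : List Fm → Option Fm → Prop where
  | ax (A : Fm) : Intu [A] (some A)
  | perm {Γ Γ' Δ} : Γ.Perm Γ' → Intu Γ Δ → Intu Γ' Δ
  | contrL {Γ Δ A} : Intu (A :: A :: Γ) Δ → Intu (A :: Γ) Δ
  | weakL {Γ Δ A} : Intu Γ Δ → Intu (A :: Γ) Δ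
  | weakR {Γ A} : Intu Γ none → Intu Γ (some A)
  | topR {Γ} : Intu Γ (some .top)
  | botL {Γ Δ} : Intu (.bot :: Γ) Δ
  | negL {Γ A} : Intu Γ (some A) → Intu (.neg A :: Γ) none
  | negR {Γ A} : Intu (A :: Γ) none → Intu Γ (some (.neg A))
  | andL {Γ Δ A B} : Intu (A :: B :: Γ) Δ → Intu (.and A B :: Γ) Δ
  | andR {Γ A B} : Intu Γ (some A) → Intu Γ (some B) → Intu Γ (some (.and A B))
  | orL {Γ Δ A B} : Intu (A :: Γ) Δ → Intu (B :: Γ) Δ → Intu (.or A B :: Γ) Δ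
  | orR1 {Γ A B} : Intu Γ (some A) → Intu Γ (some (.or A B))
  | orR2 {Γ A B} : Intu Γ (some B) → Intu Γ (some (.or A B))
  | impL {Γ Δ A B} : Intu Γ (some A) → Intu (B :: Γ) Δ → Intu (.imp A B :: Γ) Δ
  | impR {Γ A B} : Intu (A :: Γ) (some B) → Intu Γ (some (.imp A B))
  | allL {Γ Δ A} (t : Tm) : Intu (A.inst t :: Γ) Δ → Intu (.all A :: Γ) Δ
  | allR {Γ A} : Intu (Γ.map Fm.shift) (some A) → Intu Γ (some (.all A))
  | exL {Γ Δ A} : Intu (A :: Γ.map Fm.shift) (Δ.map Fm.shift) → Intu (.ex A :: Γ) Δ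
  | exR {Γ A} (t : Tm) : Intu Γ (some (A.inst t)) → Intu Γ (some (.ex A))

/-- Dowek's translation ‖·‖: double negations both before and after each
connective and quantifier, atoms unchanged. -/
def Fm.bar : Fm → Fm
  | .atom p l => .atom p l
  | .top => Fm.dn .top
  | .bot => Fm.dn .bot
  | .neg A => Fm.dn (Fm.dn (.neg A.bar))
  | .and A B => Fm.dn (.and (Fm.dn A.bar) (Fm.dn B.bar))
  | .or A B => Fm.dn (.or (Fm.dn A.bar) (Fm.dn B.bar))
  | .imp A B => Fm.dn (.imp (Fm.dn A.bar) (Fm.dn B.bar))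
  | .all A => Fm.dn (.all (Fm.dn A.bar))
  | .ex A => Fm.dn (.ex (Fm.dn A.bar))

/-- The light translation |·|: like ‖·‖ but the outermost double negation
is removed. -/
def Fm.light : Fm → Fm
  | .atom p l => .atom p l
  | .top => .top
  | .bot => .bot
  | .neg A => .neg (Fm.dn A.bar)
  | .and A B => .and (Fm.dn A.bar) (Fm.dn B.bar)
  | .or A B => .or (Fm.dn A.bar) (Fm.dn B.bar)
  | .imp A B => .imp (Fm.dn A.bar) (Fm.dn B.bar)
  | .all A => .all (Fm.dn A.bar)
  | .ex A => .ex (Fm.dn A.bar)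

/-- A formula is atomic if it is of the form `atom p l`. -/
def Fm.isAtom : Fm → Prop
  | .atom _ _ => True
  | _ => False



/-
Interpret formulas in a Heyting algebra, ignoring terms and evaluating quantifiers over a
one-point domain. Intuitionistic sequent rules are sound for this semantics, so a provable
formula evaluates to `⊤`. In the frame of open subsets of `ℝ`, the atom read as `U = (0, ∞)`
gives `¬¬U ∨ ¬¬¬¬¬U = U ∪ (-∞, 0)`, which misses `0`.
-/

namespace Fm

section HeytingSemantics

variable {α : Type*} [HeytingAlgebra α] (I : ℕ → α)

def eval : Fm → α
  | .atom p _ => I p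
  | .top => ⊤
  | .bot => ⊥
  | .neg A => (eval A)ᶜ
  | .and A B => eval A ⊓ eval B
  | .or A B => eval A ⊔ eval B
  | .imp A B => eval A ⇨ eval B
  | .all A => eval A
  | .ex A => eval A

def evalCtx (Γ : List Fm) : α := ((Γ : Multiset Fm).map (eval I)).inf

@[simp]
theorem eval_rename (f : ℕ → ℕ) (A : Fm) : (A.rename f).eval I = A.eval I := by
  induction A generalizing f <;> simp [rename, eval, *]

@[simp]
theorem eval_subst (σ : ℕ → Tm) (A : Fm) : (A.subst σ).eval I = A.eval I := by
  induction A generalizing σ <;> simp [subst, eval, *]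

@[simp]
theorem eval_shift (A : Fm) : A.shift.eval I = A.eval I := eval_rename I _ A

@[simp]
theorem eval_comp_shift : eval I ∘ shift = eval I := funext (eval_shift I)

@[simp]
theorem eval_inst (t : Tm) (A : Fm) : (A.inst t).eval I = A.eval I := eval_subst I _ A

@[simp]
theorem evalCtx_nil : evalCtx I [] = ⊤ := rfl

@[simp]
theorem evalCtx_cons (A : Fm) (Γ : List Fm) :
    evalCtx I (A :: Γ) = A.eval I ⊓ evalCtx I Γ := by
  simp [evalCtx]

theorem evalCtx_perm {Γ Γ' : List Fm} (h : Γ.Perm Γ') : evalCtx I Γ = evalCtx I Γ' := by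
  rw [evalCtx, evalCtx, Multiset.coe_eq_coe.2 h]

@[simp]
theorem evalCtx_map_shift (Γ : List Fm) : evalCtx I (Γ.map shift) = evalCtx I Γ := by
  induction Γ <;> simp [*]

end HeytingSemantics

end Fm

open Fm

section Soundness

variable {α : Type*} [HeytingAlgebra α] (I : ℕ → α)

theorem Intu.evalCtx_le {Γ : List Fm} {Δ : Option Fm} (h : Intu Γ Δ) :
    evalCtx I Γ ≤ Δ.elim ⊥ (eval I) := by
  induction h with
  | ax A => simp
  | perm hp _ ih => rwa [← evalCtx_perm I hp]
  | contrL _ ih => simpa using ih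
  | weakL _ ih => simpa using inf_le_of_right_le ih
  | weakR _ ih => exact ih.trans bot_le
  | topR => exact le_top
  | botL => simp [eval]
  | negL _ ih =>
    rw [evalCtx_cons]
    exact (inf_le_inf_left _ ih).trans (compl_inf_self _).le
  | negR _ ih =>
    simpa [eval, le_compl_iff_disjoint_left, disjoint_iff, inf_comm] using ih
  | andL _ ih => simpa [eval, inf_assoc] using ih
  | andR _ _ ih₁ ih₂ => exact le_inf ih₁ ih₂
  | orL _ _ ih₁ ih₂ =>
    simpa [eval, inf_sup_right] using sup_le ih₁ ih₂
  | orR1 _ ih => exact ih.trans le_sup_left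
  | orR2 _ ih => exact ih.trans le_sup_right
  | impL _ _ ih₁ ih₂ =>
    rw [evalCtx_cons] at ih₂ ⊢
    exact (le_inf ((inf_le_inf_left _ ih₁).trans himp_inf_le) inf_le_right).trans ih₂
  | impR _ ih => simpa [eval, le_himp_iff, inf_comm] using ih
  | allL _ _ ih => simpa [eval] using ih
  | allR _ ih => simpa [eval] using ih
  | exL _ ih => simpa [eval] using ih
  | exR _ _ ih => simpa [eval] using ih

theorem Intu.eval_eq_top {A : Fm} (h : Intu [] (some A)) : A.eval I = ⊤ :=
  top_le_iff.1 (h.evalCtx_le I)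

end Soundness

namespace TopologicalSpace.Opens

theorem compl_Ioi_zero :
    (⟨Set.Ioi 0, isOpen_Ioi⟩ : Opens ℝ)ᶜ = ⟨Set.Iio 0, isOpen_Iio⟩ := by
  ext1
  simp [coe_compl_eq_interior_compl]

theorem compl_Iio_zero :
    (⟨Set.Iio 0, isOpen_Iio⟩ : Opens ℝ)ᶜ = ⟨Set.Ioi 0, isOpen_Ioi⟩ := by
  ext1
  simp [coe_compl_eq_interior_compl]

theorem exists_compl_compl_sup_compl_ne_top : ∃ U : Opens ℝ, Uᶜᶜ ⊔ Uᶜ ≠ ⊤ := by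
  refine ⟨⟨Set.Ioi 0, isOpen_Ioi⟩, fun h => ?_⟩
  have h0 : (0 : ℝ) ∈ (⊤ : Opens ℝ) := mem_top 0
  rw [← h, compl_Ioi_zero, compl_Iio_zero] at h0
  simp at h0

end TopologicalSpace.Opens

theorem stmt9 (P : Fm) (hP : P.isAtom) :
    ¬ Intu [] (some (.or (Fm.dn P) (Fm.dn (Fm.dn (.neg P))))) := by
  obtain ⟨p, l, rfl⟩ : ∃ p l, P = .atom p l := by
    cases P <;> simp_all [Fm.isAtom]
  obtain ⟨U, hU⟩ := TopologicalSpace.Opens.exists_compl_compl_sup_compl_ne_top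
  intro h
  exact hU (by simpa [eval, Fm.dn] using h.eval_eq_top fun _ => U)
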